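/- (Expansion depth bound) Let T* be a DT maximizing R over all DTs, let T be any DT, and let L = { l' ∈ T : H(l') ≥ −λ + n(l')/n }. If T \ L is nonempty and −λ·splits(T) + ∑_{l' ∈ L} H(l') + ∑_{l' ∈ T \ L} (−λ + n(l')/n) ≥ −λ·splits(T*) + H(T*), then splits(T) ≤ splits(T*) − 1 + (1 − H(T*))/λ; in particular every branch l ∈ T \ L satisfies splits(l) ≤ splits(T*) − 1 + (1 − H(T*))/λ. -/

import Mathlib

open Finset

/-- A branch: for each feature, either unused (`none`) or fixed to a category. -/
abbrev Branch (q : ℕ) (C : Fin q → ℕ) : Type := ∀ i : Fin q, Option (Fin (C i))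

/-- States: `Sum.inl l` is the (non-terminal) branch `l`, `Sum.inr l` is its terminal state `l̄`. -/
abbrev BState (q : ℕ) (C : Fin q → ℕ) : Type := Branch q C ⊕ Branch q C

/-- The root branch `Ω`. -/
def root (q : ℕ) (C : Fin q → ℕ) : Branch q C := fun _ => none

/-- The child of `l` obtained by fixing unused feature `i` to category `j`. -/
def child {q : ℕ} {C : Fin q → ℕ} (l : Branch q C) (i : Fin q) (j : Fin (C i)) : Branch q C :=
  Function.update l i (some j)

/-- `Children(l, i)`. -/
def childrenF {q : ℕ} {C : Fin q → ℕ} (l : Branch q C) (i : Fin q) : Finset (Branch q C) :=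
  Finset.univ.image (fun j : Fin (C i) => child l i j)

/-- A policy: `act l = none` is the terminal action `ā`, `act l = some i` splits on the
unused feature `i`. -/
structure Policy (q : ℕ) (C : Fin q → ℕ) where
  act : Branch q C → Option (Fin q)
  valid : ∀ l i, act l = some i → l i = none

/-- Transition set of the action taken by `π` at branch `l`. -/
def stepSet {q : ℕ} {C : Fin q → ℕ} (π : Policy q C) (l : Branch q C) : Finset (BState q C) :=
  match π.act l with
  | none => {Sum.inr l}
  | some i => (childrenF l i).image Sum.inl

/-- Trajectory of policy `π` from branch `l`. -/
def traj {q : ℕ} {C : Fin q → ℕ} (π : Policy q C) (l : Branch q C) : ℕ → Finset (BState q C)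
  | 0 => {Sum.inl l}
  | t + 1 => (traj π l t).biUnion
      (fun s => Sum.elim (fun lu => stepSet π lu) (fun lu => ({Sum.inr lu} : Finset (BState q C))) s)

/-- `τ_l^π`: minimal time `t ≥ 1` at which the trajectory consists of terminal states only. -/
noncomputable def tau {q : ℕ} {C : Fin q → ℕ} (π : Policy q C) (l : Branch q C) : ℕ :=
  sInf {t : ℕ | 1 ≤ t ∧ ∀ x ∈ traj π l t, x.isRight}

/-- A data point `x` is in branch `l`. -/
def inBranch {q : ℕ} {C : Fin q → ℕ} (l : Branch q C) (x : ∀ i : Fin q, Fin (C i)) : Prop :=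
  ∀ (i : Fin q) (c : Fin (C i)), l i = some c → x i = c

instance {q : ℕ} {C : Fin q → ℕ} (l : Branch q C) (x : ∀ i, Fin (C i)) :
    Decidable (inBranch l x) := by unfold inBranch; infer_instance

/-- `n(l)`: number of data points in `l`. -/
def nIn {q K : ℕ} {C : Fin q → ℕ} (D : Multiset ((∀ i : Fin q, Fin (C i)) × Fin K))
    (l : Branch q C) : ℕ :=
  (D.filter (fun p => inBranch l p.1)).card

/-- `n_k(l)`: number of data points in `l` of class `k`. -/
def nk {q K : ℕ} {C : Fin q → ℕ} (D : Multiset ((∀ i : Fin q, Fin (C i)) × Fin K))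
    (l : Branch q C) (k : Fin K) : ℕ :=
  (D.filter (fun p => inBranch l p.1 ∧ p.2 = k)).card

/-- `H(l) = (max_k n_k(l)) / n`. -/
noncomputable def Hb {q K : ℕ} {C : Fin q → ℕ} (D : Multiset ((∀ i : Fin q, Fin (C i)) × Fin K))
    (l : Branch q C) : ℝ :=
  ((Finset.univ.sup (fun k : Fin K => nk D l k) : ℕ) : ℝ) / (Multiset.card D : ℝ)

/-- Reward collected at a state of the trajectory: `H(l)` for the terminal action,
`-λ` for a split action, `0` at terminal states. -/
noncomputable def rew {q K : ℕ} {C : Fin q → ℕ}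
    (D : Multiset ((∀ i : Fin q, Fin (C i)) × Fin K)) (lam : ℝ) (π : Policy q C) :
    BState q C → ℝ
  | Sum.inl lu => match π.act lu with
      | none => Hb D lu
      | some _ => -lam
  | Sum.inr _ => 0

/-- Value `V^π(l)`. -/
noncomputable def V {q K : ℕ} {C : Fin q → ℕ}
    (D : Multiset ((∀ i : Fin q, Fin (C i)) × Fin K)) (lam : ℝ)
    (π : Policy q C) (l : Branch q C) : ℝ :=
  ∑ t ∈ Finset.range (tau π l), ∑ x ∈ traj π l t, rew D lam π x

/-- State-action value `Q^π(l, a)`. -/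
noncomputable def Qv {q K : ℕ} {C : Fin q → ℕ}
    (D : Multiset ((∀ i : Fin q, Fin (C i)) × Fin K)) (lam : ℝ)
    (π : Policy q C) (l : Branch q C) : Option (Fin q) → ℝ
  | none => Hb D l
  | some i => -lam + ∑ j : Fin (C i), V D lam π (child l i j)

/-- The available actions `A(l)`. -/
def Avail {q : ℕ} {C : Fin q → ℕ} (l : Branch q C) : Finset (Option (Fin q)) :=
  insert none ((Finset.univ.filter (fun i : Fin q => l i = none)).image some)

theorem Avail_nonempty {q : ℕ} {C : Fin q → ℕ} (l : Branch q C) : (Avail l).Nonempty :=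
  ⟨none, Finset.mem_insert_self _ _⟩

/-- The sub-DT of `π` rooted in `l`: the branches whose terminal states constitute
the trajectory at time `τ_l^π`. -/
noncomputable def subDTof {q : ℕ} {C : Fin q → ℕ} (π : Policy q C) (l : Branch q C) : Finset (Branch q C) :=
  (traj π l (tau π l)).image (Sum.elim id id)

/-- `SubDT l T m`: `T` is a sub-DT rooted in `l` obtained by `m` split operations. -/
inductive SubDT {q : ℕ} {C : Fin q → ℕ} : Branch q C → Finset (Branch q C) → ℕ → Prop
  | leaf (l : Branch q C) : SubDT l {l} 0
  | split (l : Branch q C) (T : Finset (Branch q C)) (m : ℕ) (l' : Branch q C) (i : Fin q)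
      (hT : SubDT l T m) (hmem : l' ∈ T) (hnone : l' i = none) :
      SubDT l (T.erase l' ∪ childrenF l' i) (m + 1)

/-- `H(T) = ∑_{l ∈ T} H(l)`. -/
noncomputable def HT {q K : ℕ} {C : Fin q → ℕ}
    (D : Multiset ((∀ i : Fin q, Fin (C i)) × Fin K)) (T : Finset (Branch q C)) : ℝ :=
  ∑ l ∈ T, Hb D l

/-- `splits(l)`: number of features used by branch `l`. -/
def nsplits {q : ℕ} {C : Fin q → ℕ} (l : Branch q C) : ℕ :=
  (Finset.univ.filter (fun i : Fin q => l i ≠ none)).card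

open scoped Classical

/-!
The leaves of a decision tree split the data, so `∑_{l ∈ T} n(l)/n ≤ 1`, and `H(l) ≤ n(l)/n`
for every branch. Bounding each leaf of `L` by `n(l)/n` and each of the (at least one) leaves of
`T \ L` by `-λ + n(l)/n`, the hypothesis gives `R(T*) ≤ -λ·(splits(T) + 1) + 1`, which is the
bound on `splits(T)` after dividing by `λ`. A branch of `T` lies at most `splits(T)` splits
below the root.
-/

section Branches

variable {q : ℕ} {C : Fin q → ℕ}

@[simp]
lemma nsplits_root : nsplits (root q C) = 0 := by
  simp [nsplits, root]

lemma nsplits_child {l : Branch q C} {i : Fin q} (h : l i = none) (j : Fin (C i)) :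
    nsplits (child l i j) = nsplits l + 1 := by
  have : univ.filter (fun i' => child l i j i' ≠ none) = insert i (univ.filter (l · ≠ none)) := by
    ext i'
    simp only [mem_filter, mem_insert, mem_univ, true_and]
    by_cases hi : i' = i
    · subst hi; simp [child]
    · simp [child, hi]
  rw [nsplits, this, card_insert_of_notMem (by simp [h]), nsplits]

lemma child_injective (l : Branch q C) (i : Fin q) : Function.Injective (child l i) := by
  intro j j' hj
  simpa [child] using congrFun hj i

lemma inBranch_child_iff {l : Branch q C} {i : Fin q} (h : l i = none) (j : Fin (C i))
    (x : ∀ i, Fin (C i)) : inBranch (child l i j) x ↔ inBranch l x ∧ x i = j := by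
  constructor
  · intro hx
    refine ⟨fun i' c hc => ?_, hx i j (by simp [child])⟩
    have hi : i' ≠ i := by rintro rfl; simp [h] at hc
    exact hx i' c (by simpa [child, Function.update_of_ne hi] using hc)
  · rintro ⟨hx, hxi⟩ i' c hc
    by_cases hi : i' = i
    · subst hi
      simp only [child, Function.update_self, Option.some.injEq] at hc
      exact hc ▸ hxi
    · exact hx i' c (by simpa [child, Function.update_of_ne hi] using hc)

lemma SubDT.nsplits_le {l : Branch q C} {T : Finset (Branch q C)} {m : ℕ} (hT : SubDT l T m) :
    ∀ l' ∈ T, nsplits l' ≤ nsplits l + m := by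
  induction hT with
  | leaf => simp
  | split T m l' i _ hmem hnone ih =>
    intro l'' hl''
    rcases mem_union.1 hl'' with hl'' | hl''
    · exact (ih l'' (mem_of_mem_erase hl'')).trans (Nat.le_succ _)
    · obtain ⟨j, -, rfl⟩ := mem_image.1 hl''
      rw [nsplits_child hnone]
      exact Nat.succ_le_succ (ih l' hmem)

end Branches

section Counts

variable {q K : ℕ} {C : Fin q → ℕ} (D : Multiset ((∀ i : Fin q, Fin (C i)) × Fin K))

lemma nIn_le_card (l : Branch q C) : nIn D l ≤ Multiset.card D :=
  Multiset.card_le_card (Multiset.filter_le _ _)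

lemma nk_le_nIn (l : Branch q C) (k : Fin K) : nk D l k ≤ nIn D l :=
  Multiset.card_le_card (Multiset.monotone_filter_right D fun _ hp => hp.1)

lemma Hb_le_nIn_div (l : Branch q C) : Hb D l ≤ (nIn D l : ℝ) / Multiset.card D := by
  unfold Hb
  gcongr
  exact_mod_cast Finset.sup_le fun k _ => nk_le_nIn D l k

lemma sum_nIn_childrenF {l : Branch q C} {i : Fin q} (h : l i = none) :
    ∑ l' ∈ childrenF l i, nIn D l' = nIn D l := by
  set Dl := D.filter (fun p => inBranch l p.1)
  have hchild (j : Fin (C i)) : nIn D (child l i j) = (Dl.map (fun p => p.1 i)).count j := by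
    rw [Multiset.count_map, Multiset.filter_filter, nIn]
    congr 1
    exact Multiset.filter_congr fun p _ => by rw [inBranch_child_iff h, eq_comm, and_comm]
  rw [childrenF, sum_image fun j _ j' _ hj => child_injective l i hj]
  simp only [hchild]
  rw [Multiset.sum_count_eq_card fun _ _ => mem_univ _, Multiset.card_map]
  rfl

lemma SubDT.sum_nIn_le {l : Branch q C} {T : Finset (Branch q C)} {m : ℕ} (hT : SubDT l T m) :
    ∑ l' ∈ T, nIn D l' ≤ nIn D l := by
  induction hT with
  | leaf => simp
  | split T m l' i _ hmem hnone ih =>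
    calc ∑ l'' ∈ T.erase l' ∪ childrenF l' i, nIn D l''
        ≤ ∑ l'' ∈ T.erase l', nIn D l'' + ∑ l'' ∈ childrenF l' i, nIn D l'' :=
          (Nat.le_add_right _ _).trans sum_union_inter.le
      _ = ∑ l'' ∈ T, nIn D l'' := by rw [sum_nIn_childrenF D hnone, sum_erase_add _ _ hmem]
      _ ≤ nIn D l := ih

lemma SubDT.sum_nIn_div_card_le_one {T : Finset (Branch q C)} {m : ℕ}
    (hT : SubDT (root q C) T m) : ∑ l ∈ T, (nIn D l : ℝ) / Multiset.card D ≤ 1 := by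
  rw [← sum_div]
  apply div_le_one_of_le₀ _ (Nat.cast_nonneg _)
  exact_mod_cast (hT.sum_nIn_le D).trans (nIn_le_card D _)

lemma SubDT.relaxed_reward_le {T : Finset (Branch q C)} {m : ℕ} (hT : SubDT (root q C) T m)
    {L : Finset (Branch q C)} (hLT : L ⊆ T) (hne : (T \ L).Nonempty) {lam : ℝ} (hlam : 0 ≤ lam) :
    -lam * m + ∑ l ∈ L, Hb D l + ∑ l ∈ T \ L, (-lam + (nIn D l : ℝ) / Multiset.card D)
      ≤ -lam * (m + 1) + 1 := by
  have hL : ∑ l ∈ L, Hb D l ≤ ∑ l ∈ L, (nIn D l : ℝ) / Multiset.card D :=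
    sum_le_sum fun l _ => Hb_le_nIn_div D l
  have hcard : (1 : ℝ) ≤ #(T \ L) := by exact_mod_cast hne.card_pos
  have hsplit := sum_sdiff (f := fun l => (nIn D l : ℝ) / Multiset.card D) hLT
  rw [sum_add_distrib, sum_const, nsmul_eq_mul]
  nlinarith [hT.sum_nIn_div_card_le_one D]

end Counts

theorem expansion_depth_bound_general {q K : ℕ}
    {C : Fin q → ℕ}
    (D : Multiset ((∀ i : Fin q, Fin (C i)) × Fin K))
    (lam : ℝ) (hlam0 : 0 < lam)
    (Ts : Finset (Branch q C)) (ms : ℕ)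
    (T : Finset (Branch q C)) (m : ℕ) (hT : SubDT (root q C) T m)
    (L : Finset (Branch q C))
    (hL : L = T.filter (fun l' => -lam + (nIn D l' : ℝ) / (Multiset.card D : ℝ) ≤ Hb D l'))
    (hne : (T \ L).Nonempty)
    (hineq : -lam * ms + HT D Ts ≤
      -lam * m + (∑ l' ∈ L, Hb D l') +
        ∑ l' ∈ T \ L, (-lam + (nIn D l' : ℝ) / (Multiset.card D : ℝ))) :
    (m : ℝ) ≤ (ms : ℝ) - 1 + (1 - HT D Ts) / lam ∧
    ∀ l' ∈ T \ L, (nsplits l' : ℝ) ≤ (ms : ℝ) - 1 + (1 - HT D Ts) / lam := by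
  have hLT : L ⊆ T := hL ▸ filter_subset _ _
  have hrel := hT.relaxed_reward_le D hLT hne hlam0.le
  have hm : (m : ℝ) ≤ ms - 1 + (1 - HT D Ts) / lam := by
    rw [← sub_le_iff_le_add', le_div_iff₀ hlam0]
    linarith
  refine ⟨hm, fun l' hl' => le_trans ?_ hm⟩
  have := hT.nsplits_le l' (mem_sdiff.1 hl').1
  rw [nsplits_root, zero_add] at this
  exact_mod_cast this

/-- **Expansion depth bound.** With `T*` an optimal DT, `T` any DT and
`L = { l' ∈ T : H(l') ≥ -λ + n(l')/n }`: if `T \ L ≠ ∅` and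
`-λ·splits(T) + ∑_{l'∈L} H(l') + ∑_{l'∈T\L} (-λ + n(l')/n) ≥ R(T*)`, then
`splits(T) ≤ splits(T*) - 1 + (1 - H(T*))/λ`, and in particular every branch
`l ∈ T \ L` satisfies `splits(l) ≤ splits(T*) - 1 + (1 - H(T*))/λ`. -/
theorem expansion_depth_bound {q K : ℕ} (hq : 2 ≤ q) (hK : 2 ≤ K)
    {C : Fin q → ℕ} (hC : ∀ i, 2 ≤ C i)
    (D : Multiset ((∀ i : Fin q, Fin (C i)) × Fin K)) (hD : D ≠ 0)
    (lam : ℝ) (hlam0 : 0 < lam) (hlam1 : lam < 1)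
    (Ts : Finset (Branch q C)) (ms : ℕ) (hTs : SubDT (root q C) Ts ms)
    (hmax : ∀ (T : Finset (Branch q C)) (m : ℕ), SubDT (root q C) T m →
      -lam * m + HT D T ≤ -lam * ms + HT D Ts)
    (T : Finset (Branch q C)) (m : ℕ) (hT : SubDT (root q C) T m)
    (L : Finset (Branch q C))
    (hL : L = T.filter (fun l' => -lam + (nIn D l' : ℝ) / (Multiset.card D : ℝ) ≤ Hb D l'))
    (hne : (T \ L).Nonempty)
    (hineq : -lam * ms + HT D Ts ≤
      -lam * m + (∑ l' ∈ L, Hb D l') +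
        ∑ l' ∈ T \ L, (-lam + (nIn D l' : ℝ) / (Multiset.card D : ℝ))) :
    (m : ℝ) ≤ (ms : ℝ) - 1 + (1 - HT D Ts) / lam ∧
    ∀ l' ∈ T \ L, (nsplits l' : ℝ) ≤ (ms : ℝ) - 1 + (1 - HT D Ts) / lam :=
  expansion_depth_bound_general D lam hlam0 Ts ms T m hT L hL hne hineq
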